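/- Let Q be a minimal acyclic conjunctive query with join tree J_Q, and let 𝒞 = (𝒜_1,V_1,α_1,ψ_1),…,(𝒜_m,V_m,α_m,ψ_m) be a consistent cover partition for Q over a set 𝒱 of views such that, for each i, the set of atoms 𝒜_i induces a connected subtree of J_Q. Then the induced query Q_𝒞 is acyclic. -/

import Mathlib

/-- A relational atom (or fact): a relation symbol with a list of arguments.
Arguments are natural numbers, serving both as variables and as data values. -/
structure Atom where
  rel : ℕ
  args : List ℕ
deriving DecidableEq

/-- Apply a substitution to an atom. -/
def mapAtom (f : ℕ → ℕ) (A : Atom) : Atom := ⟨A.rel, A.args.map f⟩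

/-- The variables of an atom. -/
def Atom.vars (A : Atom) : Finset ℕ := A.args.toFinset

/-- The variables of a finite set of atoms. -/
def varsOf (B : Finset Atom) : Finset ℕ := B.biUnion Atom.vars

/-- A conjunctive query: a head atom and a finite set of body atoms. -/
structure CQ where
  head : Atom
  body : Finset Atom
deriving DecidableEq

/-- All variables of a conjunctive query. -/
def CQ.vars (Q : CQ) : Finset ℕ := Q.head.vars ∪ varsOf Q.body

/-- A schema: a set of relation symbols together with an arity function. -/
structure Schema where
  rels : Set ℕ
  ar : ℕ → ℕ

/-- An atom (or fact) over a schema. -/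
def atomOver (σ : Schema) (A : Atom) : Prop :=
  A.rel ∈ σ.rels ∧ A.args.length = σ.ar A.rel

/-- `Q` is a (well-formed) conjunctive query over schema `σ`:
nonempty body of σ-atoms, head relation symbol not in σ, and safety. -/
def isCQ (σ : Schema) (Q : CQ) : Prop :=
  Q.body.Nonempty ∧ (∀ A ∈ Q.body, atomOver σ A) ∧
  Q.head.rel ∉ σ.rels ∧ Q.head.vars ⊆ varsOf Q.body

/-- A database is a set of facts (finiteness is imposed where needed). -/
abbrev Database := Set Atom

/-- A database over a schema. -/
def isDBOver (σ : Schema) (D : Database) : Prop := ∀ F ∈ D, atomOver σ F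

/-- The result of a conjunctive query on a database. -/
def evalCQ (Q : CQ) (D : Database) : Set Atom :=
  { F | ∃ ν : ℕ → ℕ, (∀ A ∈ Q.body, mapAtom ν A ∈ D) ∧ mapAtom ν Q.head = F }

/-- Containment of conjunctive queries. -/
def containedCQ (Q1 Q2 : CQ) : Prop :=
  ∀ D : Database, D.Finite → evalCQ Q1 D ⊆ evalCQ Q2 D

/-- Equivalence of conjunctive queries. -/
def equivCQ (Q1 Q2 : CQ) : Prop :=
  ∀ D : Database, D.Finite → evalCQ Q1 D = evalCQ Q2 D

/-- A conjunctive query is minimal if no equivalent CQ has strictly fewer body atoms. -/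
def isMinimal (Q : CQ) : Prop :=
  ∀ Q2 : CQ, equivCQ Q Q2 → Q.body.card ≤ Q2.body.card

/-- A homomorphism from `Q2` to `Q1`. -/
def isHom (h : ℕ → ℕ) (Q2 Q1 : CQ) : Prop :=
  (∀ A ∈ Q2.body, mapAtom h A ∈ Q1.body) ∧ mapAtom h Q2.head = Q1.head

/-- A body homomorphism from `Q2` to `Q1`. -/
def isBodyHom (h : ℕ → ℕ) (Q2 Q1 : CQ) : Prop :=
  ∀ A ∈ Q2.body, mapAtom h A ∈ Q1.body

/-- A set of views over σ: each view is a CQ over σ and views have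
pairwise distinct head relation symbols. -/
def isViewSet (σ : Schema) (𝒱 : Finset CQ) : Prop :=
  (∀ V ∈ 𝒱, isCQ σ V) ∧
  ∀ V ∈ 𝒱, ∀ W ∈ 𝒱, V ≠ W → V.head.rel ≠ W.head.rel

/-- The 𝒱-defined database 𝒱(D). -/
def viewDB (𝒱 : Finset CQ) (D : Database) : Database :=
  ⋃ V ∈ 𝒱, evalCQ V D

/-- `Q'` is a CQ over the schema σ_𝒱 of the head relations of the views 𝒱. -/
def overViews (𝒱 : Finset CQ) (Q' : CQ) : Prop :=
  Q'.body.Nonempty ∧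
  (∀ A ∈ Q'.body, ∃ V ∈ 𝒱, A.rel = V.head.rel ∧ A.args.length = V.head.args.length) ∧
  (∀ V ∈ 𝒱, Q'.head.rel ≠ V.head.rel) ∧
  Q'.head.vars ⊆ varsOf Q'.body

/-- `Q'` is a 𝒱-rewriting of `Q`: `Q'` is over σ_𝒱 and `Q'(𝒱(D)) = Q(D)`
for every (finite) database `D` over σ. -/
def isRewriting (σ : Schema) (𝒱 : Finset CQ) (Q Q' : CQ) : Prop :=
  overViews 𝒱 Q' ∧
  ∀ D : Database, D.Finite → isDBOver σ D →
    evalCQ Q' (viewDB 𝒱 D) = evalCQ Q D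

/-- `T` is a join tree for the atom set `B`. -/
def joinTreeProp (B : Finset Atom) (T : SimpleGraph {A : Atom // A ∈ B}) : Prop :=
  T.IsTree ∧
  ∀ (x : ℕ) (A A' : {A : Atom // A ∈ B}) (p : T.Walk A A'), p.IsPath →
    x ∈ A.1.vars → x ∈ A'.1.vars → ∀ C ∈ p.support, x ∈ C.1.vars

/-- The atom set `B` has a join tree. -/
def hasJoinTree (B : Finset Atom) : Prop :=
  ∃ T : SimpleGraph {A : Atom // A ∈ B}, joinTreeProp B T

/-- A conjunctive query is acyclic if its body has a join tree. -/
def isAcyclicCQ (Q : CQ) : Prop := hasJoinTree Q.body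

/-- A conjunctive query is free-connex acyclic. -/
def isFreeConnex (Q : CQ) : Prop :=
  isAcyclicCQ Q ∧ hasJoinTree (insert Q.head Q.body)

/-- The bridge variables of `𝒜 ⊆ body(Q)`. -/
def bvars (Q : CQ) (𝒜 : Finset Atom) : Finset ℕ :=
  varsOf 𝒜 ∩ (Q.head.vars ∪ varsOf (Q.body \ 𝒜))

/-- An application of a view `V`: a substitution that does not unify any
quantified variable of `V` with another variable of `V`. -/
def isApplication (V : CQ) (α : ℕ → ℕ) : Prop :=
  ∀ x ∈ varsOf V.body, x ∉ V.head.vars →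
    ∀ y ∈ CQ.vars V, y ≠ x → α x ≠ α y

/-- The query α(V). -/
def applyCQ (α : ℕ → ℕ) (V : CQ) : CQ :=
  ⟨mapAtom α V.head, V.body.image (mapAtom α)⟩

/-- `(𝒜, V, α, ψ)` is a cover description for `Q`. -/
def isCoverDesc (Q : CQ) (𝒜 : Finset Atom) (V : CQ) (α ψ : ℕ → ℕ) : Prop :=
  𝒜 ⊆ Q.body ∧ isApplication V α ∧
  𝒜 ⊆ V.body.image (mapAtom α) ∧
  bvars Q 𝒜 ⊆ V.head.vars.image α ∧
  isBodyHom ψ (applyCQ α V) Q ∧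
  ∀ x ∈ varsOf 𝒜, ψ x = x

/-- A cover partition for `Q` over `𝒱`: a collection of cover descriptions
whose atom sets partition `body(Q)`. -/
def isCoverPartition (Q : CQ) (𝒱 : Finset CQ) (m : ℕ)
    (𝒜 : Fin m → Finset Atom) (V : Fin m → CQ) (α ψ : Fin m → ℕ → ℕ) : Prop :=
  (∀ i, V i ∈ 𝒱 ∧ isCoverDesc Q (𝒜 i) (V i) (α i) (ψ i)) ∧
  ∀ A ∈ Q.body, ∃! i, A ∈ 𝒜 i

/-- Consistency of a cover partition: a variable of any `α_j(V_j)` lies in the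
range of another `α_i` only if it also lies in `bvars(𝒜_j)`. -/
def isConsistent (Q : CQ) (m : ℕ) (𝒜 : Fin m → Finset Atom) (V : Fin m → CQ)
    (α : Fin m → ℕ → ℕ) : Prop :=
  ∀ i j : Fin m, i ≠ j → ∀ z ∈ CQ.vars (applyCQ (α j) (V j)),
    (∃ x ∈ CQ.vars (V i), α i x = z) → z ∈ bvars Q (𝒜 j)

/-- The query `Q_𝒞` induced by a (consistent) cover partition. -/
def inducedCQ (Q : CQ) (m : ℕ) (V : Fin m → CQ) (α : Fin m → ℕ → ℕ) : CQ :=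
  ⟨Q.head, Finset.image (fun i => mapAtom (α i) (V i).head) Finset.univ⟩

/-- Quantified variable disjointness for a family of view applications. -/
def QVD (m : ℕ) (V : Fin m → CQ) (α : Fin m → ℕ → ℕ) : Prop :=
  ∀ i j : Fin m, i ≠ j → ∀ x ∈ varsOf (V i).body, x ∉ (V i).head.vars →
    ∀ y ∈ CQ.vars (V j), α i x ≠ α j y

/-- `QE` is an expansion of `Q'` with respect to the views `𝒱`. -/
def isExpansion (𝒱 : Finset CQ) (Q' QE : CQ) : Prop :=
  ∃ (m : ℕ) (A' : Fin m → Atom) (V : Fin m → CQ) (α : Fin m → ℕ → ℕ),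
    (∀ i, V i ∈ 𝒱 ∧ isApplication (V i) (α i) ∧ A' i = mapAtom (α i) (V i).head) ∧
    Q'.body = Finset.image A' Finset.univ ∧
    QVD m V α ∧
    QE.head = Q'.head ∧
    QE.body = Finset.biUnion Finset.univ (fun i => (V i).body.image (mapAtom (α i)))

/-- `atoms(x)`: the body atoms of `Q` containing the variable `x`. -/
def atomsWith (Q : CQ) (x : ℕ) : Finset Atom :=
  Q.body.filter (fun A => x ∈ A.vars)

/-- Hierarchical conjunctive queries. -/
def isHierarchical (Q : CQ) : Prop :=
  ∀ x y : ℕ, atomsWith Q x ⊆ atomsWith Q y ∨ atomsWith Q y ⊆ atomsWith Q x ∨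
    atomsWith Q x ∩ atomsWith Q y = ∅

/-- q-hierarchical conjunctive queries. -/
def isQHierarchical (Q : CQ) : Prop :=
  isHierarchical Q ∧ ∀ x y : ℕ, atomsWith Q x ⊂ atomsWith Q y →
    x ∈ Q.head.vars → y ∈ Q.head.vars

/-- `P` is a partition of `body(Q)` witnessing weak head arity at most `k`. -/
def witnessesWHA (Q : CQ) (k n : ℕ) (P : Fin n → Finset Atom) : Prop :=
  (∀ i, (P i).Nonempty) ∧ (∀ i, P i ⊆ Q.body) ∧ (∀ A ∈ Q.body, ∃! i, A ∈ P i) ∧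
  (∀ i, (varsOf (P i) ∩ Q.head.vars).card ≤ k) ∧
  (∀ i j, i ≠ j → ∀ x ∈ varsOf (P i), x ∈ varsOf (P j) → x ∈ Q.head.vars)

/-- `Q` has weak head arity at most `k`. -/
def hasWHAle (Q : CQ) (k : ℕ) : Prop := ∃ n P, witnessesWHA Q k n P

/-- The weak head arity of `Q`. -/
noncomputable def weakHeadArity (Q : CQ) : ℕ := sInf {k | hasWHAle Q k}

/-- The cover graph of `Q`: vertices are the body atoms, with an edge between
two atoms iff they share a variable not occurring in the head. -/
def coverGraph (Q : CQ) : SimpleGraph {A : Atom // A ∈ Q.body} :=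
  SimpleGraph.fromRel (fun A B => ∃ x, x ∈ A.1.vars ∧ x ∈ B.1.vars ∧ x ∉ Q.head.vars)

/-- A subset `s` of the atom set `B` is connected in the (join) tree `T`. -/
def connectedIn (B : Finset Atom) (T : SimpleGraph {A : Atom // A ∈ B}) (s : Finset Atom) : Prop :=
  (T.induce {A : {A : Atom // A ∈ B} | A.1 ∈ s}).Connected

section JTAuxSection

open SimpleGraph Walk

namespace JTAux

variable {V : Type*} [DecidableEq V] {G : SimpleGraph V}

/-- The chosen path from `v` to the root `r` in a tree. -/
noncomputable def ptr (hG : G.IsTree) (r v : V) : G.Walk v r :=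
  (hG.existsUnique_path v r).choose

lemma ptr_isPath (hG : G.IsTree) (r v : V) : (ptr hG r v).IsPath :=
  (hG.existsUnique_path v r).choose_spec.1

lemma ptr_unique (hG : G.IsTree) (r v : V) (p : G.Walk v r) (hp : p.IsPath) :
    p = ptr hG r v :=
  (hG.existsUnique_path v r).choose_spec.2 p hp

/-- depth of a vertex -/
noncomputable def len (hG : G.IsTree) (r v : V) : ℕ := (ptr hG r v).length

lemma ptr_drop (hG : G.IsTree) (r : V) {v u : V} (h : u ∈ (ptr hG r v).support) :
    (ptr hG r v).dropUntil u h = ptr hG r u :=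
  ptr_unique hG r u _ ((ptr_isPath hG r v).dropUntil h)

lemma len_add (hG : G.IsTree) (r : V) {v u : V} (h : u ∈ (ptr hG r v).support) :
    ((ptr hG r v).takeUntil u h).length + len hG r u = len hG r v := by
  conv_rhs => rw [len, ← Walk.take_spec (ptr hG r v) h]
  rw [Walk.length_append, ptr_drop hG r h]
  rfl

lemma len_le (hG : G.IsTree) (r : V) {v u : V} (h : u ∈ (ptr hG r v).support) :
    len hG r u ≤ len hG r v := by
  rw [← len_add hG r h]; omega

lemma anc_support_subset (hG : G.IsTree) (r : V) {v u : V} (h : u ∈ (ptr hG r v).support) :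
    (ptr hG r u).support ⊆ (ptr hG r v).support := by
  rw [← ptr_drop hG r h]; exact Walk.support_dropUntil_subset _ _

lemma eq_of_len_le (hG : G.IsTree) (r : V) {v u : V} (h : u ∈ (ptr hG r v).support)
    (hl : len hG r v ≤ len hG r u) : u = v := by
  have h2 := len_add hG r h
  have h3 : ((ptr hG r v).takeUntil u h).length = 0 := by omega
  exact (Walk.eq_of_length_eq_zero h3).symm

/-- Dichotomy: any two ancestors of `v` are comparable. -/
lemma anc_dichotomy (hG : G.IsTree) (r : V) {v u1 u2 : V}
    (h1 : u1 ∈ (ptr hG r v).support) (h2 : u2 ∈ (ptr hG r v).support) :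
    u2 ∈ (ptr hG r u1).support ∨ u1 ∈ (ptr hG r u2).support := by
  have hsplit := Walk.take_spec (ptr hG r v) h1
  have h2' : u2 ∈ (((ptr hG r v).takeUntil u1 h1).append ((ptr hG r v).dropUntil u1 h1)).support := by
    rw [hsplit]; exact h2
  rw [Walk.mem_support_append_iff] at h2'
  rcases h2' with h2' | h2'
  · -- u2 on the segment from v to u1
    right
    have hsplit2 := Walk.take_spec ((ptr hG r v).takeUntil u1 h1) h2'
    -- ptr v = t12 ++ (d12 ++ d1)
    have hw : ((((ptr hG r v).takeUntil u1 h1).takeUntil u2 h2').append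
        ((((ptr hG r v).takeUntil u1 h1).dropUntil u2 h2').append ((ptr hG r v).dropUntil u1 h1))).IsPath := by
      rw [Walk.append_assoc, hsplit2, hsplit]
      exact ptr_isPath hG r v
    have hp2 := hw.of_append_right
    have := ptr_unique hG r u2 _ hp2
    rw [← this, Walk.mem_support_append_iff]
    left; exact Walk.end_mem_support _
  · left
    rw [ptr_drop hG r h1] at h2'
    exact h2'

/-- If `t` has minimal depth along some walk from `a` to `t`, then `t` is an ancestor of `a`. -/
lemma anc_of_min (hG : G.IsTree) (r : V) {a t : V} (ρ : G.Walk a t)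
    (hmin : ∀ c ∈ ρ.support, len hG r t ≤ len hG r c) :
    t ∈ (ptr hG r a).support := by
  induction ρ with
  | nil => exact Walk.start_mem_support _
  | @cons a b t hab ρ' ih =>
    have ht : t ∈ (ptr hG r b).support := by
      refine ih ?_
      intro c hc
      exact hmin c (by rw [Walk.support_cons]; exact List.mem_cons_of_mem _ hc)
    by_cases hpath : (Walk.cons hab (ptr hG r b)).IsPath
    · have := ptr_unique hG r a _ hpath
      rw [← this, Walk.support_cons]
      exact List.mem_cons_of_mem _ ht
    · have hb := ptr_isPath hG r b
      rw [Walk.cons_isPath_iff] at hpath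
      push_neg at hpath
      have ha : a ∈ (ptr hG r b).support := hpath hb
      rcases anc_dichotomy hG r ha ht with h | h
      · -- t ∈ support (ptr a)
        exact h
      · -- a ∈ support (ptr t): then a = t
        have hle : len hG r t ≤ len hG r a := hmin a (Walk.start_mem_support _)
        have : a = t := eq_of_len_le hG r h hle
        subst this
        exact Walk.start_mem_support _

/-- "Between" lemma: if `t, c` are ancestors of `v` with `len t ≤ len c`, then `c` lies
on the segment of the root path of `v` from `v` up to `t`. -/
lemma mem_takeUntil_of_anc (hG : G.IsTree) (r : V) {v t c : V}
    (ht : t ∈ (ptr hG r v).support) (hc : c ∈ (ptr hG r v).support)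
    (hl : len hG r t ≤ len hG r c) :
    c ∈ ((ptr hG r v).takeUntil t ht).support := by
  have hc' : c ∈ (((ptr hG r v).takeUntil t ht).append ((ptr hG r v).dropUntil t ht)).support := by
    rw [Walk.take_spec]; exact hc
  rw [Walk.mem_support_append_iff] at hc'
  rcases hc' with hc' | hc'
  · exact hc'
  · rw [ptr_drop hG r ht] at hc'
    have : c = t := eq_of_len_le hG r hc' hl
    subst this
    exact Walk.end_mem_support _

lemma len_root (hG : G.IsTree) (r : V) : len hG r r = 0 := by
  have : (Walk.nil : G.Walk r r) = ptr hG r r := ptr_unique hG r r _ (by simp)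
  rw [len, ← this]; rfl

lemma eq_root_of_len_eq_zero (hG : G.IsTree) (r : V) {v : V} (h : len hG r v = 0) : v = r :=
  Walk.eq_of_length_eq_zero h

/-- The parent of a non-root vertex. -/
lemma exists_parent (hG : G.IsTree) (r : V) {v : V} (hv : v ≠ r) :
    ∃ u : V, u ∈ (ptr hG r v).support ∧ len hG r u + 1 = len hG r v := by
  have hgen : ∀ (p : G.Walk v r), p.IsPath → p = ptr hG r v →
      ∃ u : V, u ∈ (ptr hG r v).support ∧ len hG r u + 1 = len hG r v := by
    intro p hp hpe
    cases p with
    | nil => exact absurd rfl hv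
    | @cons _ b _ hab q =>
      refine ⟨b, ?_, ?_⟩
      · rw [← hpe, Walk.support_cons]
        exact List.mem_cons_of_mem _ (Walk.start_mem_support q)
      · rw [Walk.cons_isPath_iff] at hp
        have := ptr_unique hG r b q hp.1
        rw [len, len, ← hpe, ← this, Walk.length_cons]
  exact hgen (ptr hG r v) (ptr_isPath hG r v) rfl

end JTAux



namespace JTAux2

variable {W : Type*}

/-- The graph defined by a parent function with root `r`. -/
def pgraph (p : W → W) (r : W) : SimpleGraph W :=
  SimpleGraph.fromRel (fun a b => a ≠ r ∧ p a = b)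

lemma pgraph_adj {p : W → W} {r : W} {a b : W} :
    (pgraph p r).Adj a b ↔ a ≠ b ∧ ((a ≠ r ∧ p a = b) ∨ (b ≠ r ∧ p b = a)) :=
  SimpleGraph.fromRel_adj _ a b

variable {p : W → W} {r : W} {d : W → ℕ}

lemma pgraph_adj_parent (hd : ∀ w, w ≠ r → d (p w) < d w) {w : W} (hw : w ≠ r) :
    (pgraph p r).Adj w (p w) := by
  refine pgraph_adj.mpr ⟨?_, Or.inl ⟨hw, rfl⟩⟩
  intro h
  have := hd w hw
  rw [← h] at this
  omega

lemma pgraph_reach (hd : ∀ w, w ≠ r → d (p w) < d w) (w : W) :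
    (pgraph p r).Reachable w r := by
  by_cases h : w = r
  · rw [h]
  · have hlt := hd w h
    have hrec := pgraph_reach hd (p w)
    exact ((pgraph_adj_parent hd h).reachable).trans hrec
termination_by d w
decreasing_by exact hd w h

lemma pgraph_connected (hd : ∀ w, w ≠ r → d (p w) < d w) : (pgraph p r).Connected := by
  have : Nonempty W := ⟨r⟩
  exact ⟨fun u v => (pgraph_reach hd u).trans (pgraph_reach hd v).symm⟩

lemma pgraph_isBridge (hpr : p r = r) (hd : ∀ w, w ≠ r → d (p w) < d w)
    {a : W} (ha : a ≠ r) : (pgraph p r).IsBridge s(a, p a) := by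
  rw [isBridge_iff_adj_and_forall_walk_mem_edges]
  have _hadj := pgraph_adj_parent hd ha
  set S : W → Prop := fun v => ∃ k, p^[k] v = a with hS
  have hSa : S a := ⟨0, rfl⟩
  have hd_le : ∀ (k : ℕ) (v : W), p^[k] v = a → d a ≤ d v := by
    intro k
    induction k with
    | zero => intro v h; exact le_of_eq (congrArg d h.symm)
    | succ n ih =>
      intro v h
      rw [Function.iterate_succ_apply] at h
      have h1 := ih (p v) h
      by_cases hv : v = r
      · rw [hv, hpr] at h1; rw [hv]; exact h1
      · exact le_trans h1 (le_of_lt (hd v hv))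
  have hSb : ¬ S (p a) := by
    rintro ⟨k, hk⟩
    have := hd_le k (p a) hk
    have := hd a ha
    omega
  have hcross : ∀ u v : W, (pgraph p r).Adj u v → S u → ¬ S v → u = a ∧ v = p a := by
    intro u v hadj hu hv
    rcases pgraph_adj.mp hadj with ⟨hne, h | h⟩
    · obtain ⟨k, hk⟩ := hu
      cases k with
      | zero => simp at hk; subst hk; exact ⟨rfl, h.2.symm⟩
      | succ n =>
        rw [Function.iterate_succ_apply] at hk
        exact absurd ⟨n, h.2 ▸ hk⟩ hv
    · obtain ⟨k, hk⟩ := hu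
      exact absurd ⟨k + 1, by rwa [Function.iterate_succ_apply, h.2]⟩ hv
  have hwalk : ∀ {u v : W} (ω : (pgraph p r).Walk u v), S u → ¬ S v → s(a, p a) ∈ ω.edges := by
    intro u v ω
    induction ω with
    | nil => intro h1 h2; exact absurd h1 h2
    | @cons u c v hadj ω' ih =>
      intro h1 h2
      by_cases hc : S c
      · rw [Walk.edges_cons]
        exact List.mem_cons_of_mem _ (ih hc h2)
      · obtain ⟨rfl, rfl⟩ := hcross u c hadj h1 hc
        rw [Walk.edges_cons]
        exact List.mem_cons_self
  intro ω
  exact hwalk ω hSa hSb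

lemma pgraph_isTree (hpr : p r = r) (hd : ∀ w, w ≠ r → d (p w) < d w) :
    (pgraph p r).IsTree := by
  refine ⟨pgraph_connected hd, ?_⟩
  rw [isAcyclic_iff_forall_adj_isBridge]
  intro u v hadj
  rcases pgraph_adj.mp hadj with ⟨hne, h | h⟩
  · rw [← h.2]
    exact pgraph_isBridge hpr hd h.1
  · rw [Sym2.eq_swap, ← h.2]
    exact pgraph_isBridge hpr hd h.1

/-- Walk down to `z` staying in `S`. -/
lemma pgraph_walk_to (hd : ∀ w, w ≠ r → d (p w) < d w) {S : Set W} {z : W}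
    (hstep : ∀ w ∈ S, w ≠ z → w ≠ r ∧ p w ∈ S) :
    ∀ (v : W), v ∈ S → ∃ ω : (pgraph p r).Walk v z, ∀ c ∈ ω.support, c ∈ S
  | v, hv => by
    by_cases hvz : v = z
    · subst hvz
      refine ⟨Walk.nil, ?_⟩
      intro c hc
      rw [Walk.support_nil, List.mem_singleton] at hc
      rw [hc]; exact hv
    · obtain ⟨hvr, hpv⟩ := hstep v hv hvz
      obtain ⟨ω', hω'⟩ := pgraph_walk_to hd hstep (p v) hpv
      refine ⟨Walk.cons (pgraph_adj_parent hd hvr) ω', ?_⟩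
      intro c hc
      rw [Walk.support_cons] at hc
      rcases List.mem_cons.mp hc with rfl | hc
      · exact hv
      · exact hω' c hc
termination_by v _ => d v
decreasing_by exact hd v hvr

lemma pgraph_path_support [DecidableEq W] (hpr : p r = r) (hd : ∀ w, w ≠ r → d (p w) < d w)
    {S : Set W} {z : W} (hstep : ∀ w ∈ S, w ≠ z → w ≠ r ∧ p w ∈ S)
    {u w : W} (hu : u ∈ S) (hw : w ∈ S)
    (ρ : (pgraph p r).Walk u w) (hρ : ρ.IsPath) : ∀ c ∈ ρ.support, c ∈ S := by
  obtain ⟨ω1, hω1⟩ := pgraph_walk_to hd hstep u hu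
  obtain ⟨ω2, hω2⟩ := pgraph_walk_to hd hstep w hw
  set full : (pgraph p r).Walk u w := ω1.append ω2.reverse with hfull
  have hfS : ∀ c ∈ full.support, c ∈ S := by
    intro c hc
    rw [hfull, Walk.mem_support_append_iff] at hc
    rcases hc with hc | hc
    · exact hω1 c hc
    · rw [Walk.support_reverse, List.mem_reverse] at hc
      exact hω2 c hc
  have htree := pgraph_isTree (d := d) hpr hd
  have hacyc := htree.IsAcyclic
  have : (⟨ρ, hρ⟩ : (pgraph p r).Path u w) = full.toPath := hacyc.path_unique _ _
  intro c hc
  have : ρ = (full.toPath : (pgraph p r).Walk u w) := congrArg Subtype.val this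
  rw [this] at hc
  exact hfS c (Walk.support_toPath_subset full hc)

end JTAux2

end JTAuxSection

section MainProof
open SimpleGraph Walk

private lemma exists_min_on {β : Type*} (f : β → ℕ) (s : Set β) (hs : s.Nonempty) :
    ∃ b ∈ s, ∀ b' ∈ s, f b ≤ f b' := by
  obtain ⟨b0, hb0⟩ := hs
  have hne : (f '' s).Nonempty := ⟨f b0, ⟨b0, hb0, rfl⟩⟩
  obtain ⟨b, hb, hfb⟩ := Nat.sInf_mem hne
  refine ⟨b, hb, fun b' hb' => ?_⟩
  rw [hfb]
  exact Nat.sInf_le ⟨b', hb', rfl⟩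

theorem statement6' (σ : Schema) (Q : CQ) (𝒱 : Finset CQ)
    (hQ : isCQ σ Q) (hmin : isMinimal Q)
    (T : SimpleGraph {A : Atom // A ∈ Q.body}) (hT : joinTreeProp Q.body T)
    (m : ℕ) (𝒜 : Fin m → Finset Atom) (V : Fin m → CQ) (α ψ : Fin m → ℕ → ℕ)
    (hcp : isCoverPartition Q 𝒱 m 𝒜 V α ψ) (hcons : isConsistent Q m 𝒜 V α)
    (hconn : ∀ i, connectedIn Q.body T (𝒜 i)) :
    isAcyclicCQ (inducedCQ Q m V α) := by
  classical
  obtain ⟨hTree, hJoin⟩ := hT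
  -- vertex type of the join tree
  obtain ⟨a0, ha0⟩ := hQ.1
  set r0 : {A : Atom // A ∈ Q.body} := ⟨a0, ha0⟩ with hr0
  set L : {A : Atom // A ∈ Q.body} → ℕ := JTAux.len hTree r0 with hL
  -- blocks
  have hdisj : ∀ (a : Atom) (i j : Fin m), a ∈ 𝒜 i → a ∈ 𝒜 j → i = j := by
    intro a i j hi hj
    obtain ⟨k, hk, hu⟩ := hcp.2 a ((hcp.1 i).2.1 hi)
    exact (hu i hi).trans (hu j hj).symm
  have hblkex : ∀ v : {A : Atom // A ∈ Q.body}, ∃ i, v.1 ∈ 𝒜 i := by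
    intro v
    obtain ⟨i, hi, _⟩ := hcp.2 v.1 v.2
    exact ⟨i, hi⟩
  choose blk blkmem using hblkex
  -- paths inside blocks stay inside blocks
  have hblockpath : ∀ (i : Fin m) (a b : {A : Atom // A ∈ Q.body}),
      a.1 ∈ 𝒜 i → b.1 ∈ 𝒜 i → ∀ (ρ : T.Walk a b), ρ.IsPath →
      ∀ c ∈ ρ.support, c.1 ∈ 𝒜 i := by
    intro i a b ha hb ρ hρ c hc
    have hcn : (T.induce {A : {A : Atom // A ∈ Q.body} | A.1 ∈ 𝒜 i}).Connected := hconn i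
    obtain ⟨ω₀⟩ := hcn ⟨a, ha⟩ ⟨b, hb⟩
    let hom : (T.induce {A : {A : Atom // A ∈ Q.body} | A.1 ∈ 𝒜 i}) →g T :=
      ⟨Subtype.val, fun h => h⟩
    have hmaps : ∀ x, hom x = x.1 := fun _ => rfl
    set ω : T.Walk a b := ω₀.map hom with hω
    have huniq : (⟨ρ, hρ⟩ : T.Path a b) = ω.toPath := hTree.IsAcyclic.path_unique _ _
    have hρω : ρ = (ω.toPath : T.Walk a b) := congrArg Subtype.val huniq
    rw [hρω] at hc
    have hc2 : c ∈ ω.support := Walk.support_toPath_subset ω hc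
    rw [hω, Walk.support_map, List.mem_map] at hc2
    obtain ⟨c₀, _, hc₀⟩ := hc2
    rw [← hc₀]
    exact c₀.2
  -- block tops
  have htopex : ∀ i : Fin m, ∃ t : {A : Atom // A ∈ Q.body},
      t.1 ∈ 𝒜 i ∧ ∀ v : {A : Atom // A ∈ Q.body}, v.1 ∈ 𝒜 i → L t ≤ L v := by
    intro i
    have hne : ({v : {A : Atom // A ∈ Q.body} | v.1 ∈ 𝒜 i}).Nonempty := by
      have hcn : (T.induce {A : {A : Atom // A ∈ Q.body} | A.1 ∈ 𝒜 i}).Connected := hconn i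
      have := hcn.nonempty
      obtain ⟨⟨v, hv⟩⟩ := this
      exact ⟨v, hv⟩
    obtain ⟨t, ht, hmin'⟩ := exists_min_on L _ hne
    exact ⟨t, ht, hmin'⟩
  choose top topmem topmin using htopex
  set D : Fin m → ℕ := fun i => L (top i) with hD
  -- induced atoms
  set B : Fin m → Atom := fun i => mapAtom (α i) (V i).head with hB
  have hBmem : ∀ i, B i ∈ (inducedCQ Q m V α).body := fun i =>
    Finset.mem_image.mpr ⟨i, Finset.mem_univ i, rfl⟩
  -- representatives
  have hrepex : ∀ w : {A : Atom // A ∈ (inducedCQ Q m V α).body},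
      ∃ i, B i = w.1 ∧ ∀ j, B j = w.1 → D i ≤ D j := by
    intro w
    have hne : ({i : Fin m | B i = w.1}).Nonempty := by
      obtain ⟨i, _, hi⟩ := Finset.mem_image.mp w.2
      exact ⟨i, hi⟩
    obtain ⟨i, hi, hmin'⟩ := exists_min_on D _ hne
    exact ⟨i, hi, fun j hj => hmin' j hj⟩
  choose rep repB repmin using hrepex
  set i0 : Fin m := blk r0 with hi0
  set wr : {A : Atom // A ∈ (inducedCQ Q m V α).body} := ⟨B i0, hBmem i0⟩ with hwr
  -- depth facts
  have hLr0 : L r0 = 0 := JTAux.len_root hTree r0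
  have hD0 : ∀ i, D i = 0 ↔ i = i0 := by
    intro i
    constructor
    · intro h
      have : top i = r0 := JTAux.eq_root_of_len_eq_zero hTree r0 h
      have hmem : r0.1 ∈ 𝒜 i := this ▸ topmem i
      exact hdisj r0.1 i i0 hmem (blkmem r0)
    · intro h
      rw [h]
      have h1 := topmin i0 r0 (blkmem r0)
      have h2 : D i0 = L (top i0) := rfl
      omega
  have hrep_wr : rep wr = i0 := by
    have h1 : D (rep wr) ≤ D i0 := repmin wr i0 rfl
    have h2 : D i0 = 0 := (hD0 i0).mpr rfl
    exact (hD0 (rep wr)).mp (by omega)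
  have hwr_iff : ∀ w : {A : Atom // A ∈ (inducedCQ Q m V α).body},
      rep w = i0 ↔ w = wr := by
    intro w
    constructor
    · intro h
      apply Subtype.ext
      rw [← repB w, h]
    · intro h
      subst h
      exact hrep_wr
  -- parent atoms of block tops
  have hqex : ∀ i : Fin m, ∃ u : {A : Atom // A ∈ Q.body}, i ≠ i0 →
      (u ∈ (JTAux.ptr hTree r0 (top i)).support ∧ L u + 1 = L (top i) ∧ u.1 ∉ 𝒜 i) := by
    intro i
    by_cases hi : i = i0
    · exact ⟨r0, fun h => absurd hi h⟩
    · have htne : top i ≠ r0 := by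
        intro h
        have hmem : r0.1 ∈ 𝒜 i := h ▸ topmem i
        exact hi (hdisj r0.1 i i0 hmem (blkmem r0))
      obtain ⟨u, hu1, hu2⟩ := JTAux.exists_parent hTree r0 htne
      rw [← hL] at hu2
      refine ⟨u, fun _ => ⟨hu1, hu2, fun hmem => ?_⟩⟩
      have := topmin i u hmem
      omega
  choose q hq using hqex
  set P : Fin m → Fin m := fun i => blk (q i) with hP
  -- parent function on induced atoms
  set pW : {A : Atom // A ∈ (inducedCQ Q m V α).body} →
      {A : Atom // A ∈ (inducedCQ Q m V α).body} :=
    fun w => if rep w = i0 then w else ⟨B (P (rep w)), hBmem _⟩ with hpW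
  set DW : {A : Atom // A ∈ (inducedCQ Q m V α).body} → ℕ := fun w => D (rep w) with hDW
  have hpWr : pW wr = wr := by simp only [hpW, hrep_wr, if_pos]
  have hdW : ∀ w, w ≠ wr → DW (pW w) < DW w := by
    intro w hwne
    have hri : rep w ≠ i0 := fun h => hwne ((hwr_iff w).mp h)
    obtain ⟨hqmem, hqlen, hqnot⟩ := hq (rep w) hri
    have hpweq : pW w = ⟨B (P (rep w)), hBmem _⟩ := by simp only [hpW, if_neg hri]
    have h1 : DW (pW w) ≤ D (P (rep w)) := by
      rw [hpweq]
      exact repmin _ (P (rep w)) rfl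
    have h2 : D (P (rep w)) ≤ L (q (rep w)) := topmin _ (q (rep w)) (blkmem (q (rep w)))
    have h3 : L (q (rep w)) + 1 = D (rep w) := hqlen
    have h4 : DW w = D (rep w) := rfl
    omega
  -- bridge-variable facts
  have hvars_map : ∀ (f : ℕ → ℕ) (A : Atom), (mapAtom f A).vars = A.vars.image f := by
    intro f A
    ext y
    simp [mapAtom, Atom.vars, List.mem_map]
  have hF2 : ∀ i, bvars Q (𝒜 i) ⊆ (B i).vars := by
    intro i
    have : (B i).vars = (V i).head.vars.image (α i) := hvars_map _ _
    rw [this]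
    exact (hcp.1 i).2.2.2.2.1
  have hF1 : ∀ i j, i ≠ j → ∀ y, y ∈ (B i).vars → y ∈ (B j).vars →
      y ∈ bvars Q (𝒜 j) := by
    intro i j hij y hyi hyj
    refine hcons i j hij y ?_ ?_
    · exact Finset.mem_union_left _ hyj
    · rw [hvars_map] at hyi
      obtain ⟨xv, hxv, hxvy⟩ := Finset.mem_image.mp hyi
      exact ⟨xv, Finset.mem_union_left _ hxv, hxvy⟩
  -- the join tree for the induced query
  refine ⟨JTAux2.pgraph pW wr, JTAux2.pgraph_isTree (d := DW) hpWr hdW, ?_⟩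
  intro x u w ρ hρ hxu hxw
  by_cases huw : u = w
  · subst huw
    have hnil : ρ = Walk.nil := (Walk.isPath_iff_eq_nil (p := ρ)).mp hρ
    intro C hC
    rw [hnil, Walk.support_nil, List.mem_singleton] at hC
    rw [hC]; exact hxu
  · set S : Set {A : Atom // A ∈ (inducedCQ Q m V α).body} := {v | x ∈ v.1.vars} with hS
    have hu : u ∈ S := hxu
    have hw : w ∈ S := hxw
    have hSb : ∀ v, v ∈ S → x ∈ bvars Q (𝒜 (rep v)) := by
      intro v hv
      by_cases hvu : v = u
      · have hrep_ne : rep w ≠ rep v := by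
          intro he
          exact huw (Subtype.ext (by rw [← repB u, ← repB w, he, hvu]))
        exact hF1 (rep w) (rep v) hrep_ne x (by rw [repB w]; exact hw) (by rw [repB v]; exact hv)
      · have hrep_ne : rep u ≠ rep v := by
          intro he
          exact hvu (Subtype.ext (by rw [← repB v, ← repB u, he]))
        exact hF1 (rep u) (rep v) hrep_ne x (by rw [repB u]; exact hu) (by rw [repB v]; exact hv)
    have hSa : ∀ v, v ∈ S → ∃ a : {A : Atom // A ∈ Q.body},
        a.1 ∈ 𝒜 (rep v) ∧ x ∈ a.1.vars := by
      intro v hv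
      have hb := hSb v hv
      rw [bvars, Finset.mem_inter] at hb
      obtain ⟨a, ha, hax⟩ := Finset.mem_biUnion.mp hb.1
      exact ⟨⟨a, (hcp.1 (rep v)).2.1 ha⟩, ha, hax⟩
    -- the highest atom containing x
    have htxex : ({v : {A : Atom // A ∈ Q.body} | x ∈ v.1.vars}).Nonempty := by
      obtain ⟨a, _, hax⟩ := hSa u hu
      exact ⟨a, hax⟩
    obtain ⟨tx, htxv, htxmin⟩ := exists_min_on L _ htxex
    have hanc_tx : ∀ a : {A : Atom // A ∈ Q.body}, x ∈ a.1.vars →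
        tx ∈ (JTAux.ptr hTree r0 a).support := by
      intro a hax
      obtain ⟨ω⟩ := hTree.isConnected a tx
      refine JTAux.anc_of_min hTree r0 (ω.toPath : T.Walk a tx) ?_
      intro c hc
      have hcx : x ∈ c.1.vars := hJoin x a tx (ω.toPath : T.Walk a tx) ω.toPath.2 hax htxv c hc
      exact htxmin c hcx
    -- the sink element z
    have hzex : ∃ z, z ∈ S ∧ ∀ v, v ∈ S → tx.1 ∈ 𝒜 (rep v) → v = z := by
      by_cases hcase : ∃ v, v ∈ S ∧ tx.1 ∈ 𝒜 (rep v)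
      · obtain ⟨z, hzS, hz2⟩ := hcase
        refine ⟨z, hzS, fun v hv hvtx => ?_⟩
        have : rep v = rep z := hdisj tx.1 (rep v) (rep z) hvtx hz2
        exact Subtype.ext (by rw [← repB v, ← repB z, this])
      · exact ⟨u, hu, fun v hv hvtx => absurd ⟨v, hv, hvtx⟩ hcase⟩
    obtain ⟨z, hzS, hzuniq⟩ := hzex
    have hstep : ∀ v ∈ S, v ≠ z → v ≠ wr ∧ pW v ∈ S := by
      intro v hvS hvz
      obtain ⟨a, haA, hax⟩ := hSa v hvS
      have htxnot : tx.1 ∉ 𝒜 (rep v) := fun h => hvz (hzuniq v hvS h)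
      have hanc_a_tx := hanc_tx a hax
      have hvwr : v ≠ wr := by
        intro hvwr'
        have hri : rep v = i0 := by rw [hvwr']; exact hrep_wr
        have hr0mem : r0.1 ∈ 𝒜 (rep v) := by rw [hri]; exact blkmem r0
        have hsup : ∀ c ∈ (JTAux.ptr hTree r0 a).support, c.1 ∈ 𝒜 (rep v) :=
          hblockpath (rep v) a r0 haA hr0mem _ (JTAux.ptr_isPath hTree r0 a)
        exact htxnot (hsup tx hanc_a_tx)
      have hri : rep v ≠ i0 := fun h => hvwr ((hwr_iff v).mp h)
      obtain ⟨hqmem, hqlen, hqnot⟩ := hq (rep v) hri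
      have htopa : top (rep v) ∈ (JTAux.ptr hTree r0 a).support := by
        obtain ⟨ω⟩ := hTree.isConnected a (top (rep v))
        refine JTAux.anc_of_min hTree r0 (ω.toPath : T.Walk a (top (rep v))) ?_
        intro c hc
        have : c.1 ∈ 𝒜 (rep v) :=
          hblockpath (rep v) a (top (rep v)) haA (topmem (rep v)) _ ω.toPath.2 c hc
        exact topmin (rep v) c this
      have hq_anc_a : q (rep v) ∈ (JTAux.ptr hTree r0 a).support :=
        JTAux.anc_support_subset hTree r0 htopa hqmem
      have hlt : L tx < L (top (rep v)) := by
        by_contra hle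
        push_neg at hle
        have hbet := JTAux.mem_takeUntil_of_anc hTree r0 htopa hanc_a_tx hle
        have hTP : ((JTAux.ptr hTree r0 a).takeUntil (top (rep v)) htopa).IsPath :=
          (JTAux.ptr_isPath hTree r0 a).takeUntil htopa
        exact htxnot (hblockpath (rep v) a (top (rep v)) haA (topmem (rep v)) _ hTP tx hbet)
      have hq_on : q (rep v) ∈ ((JTAux.ptr hTree r0 a).takeUntil tx hanc_a_tx).support :=
        JTAux.mem_takeUntil_of_anc hTree r0 hanc_a_tx hq_anc_a
          (show L tx ≤ L (q (rep v)) by omega)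
      have hTP2 : ((JTAux.ptr hTree r0 a).takeUntil tx hanc_a_tx).IsPath :=
        (JTAux.ptr_isPath hTree r0 a).takeUntil hanc_a_tx
      have hqx : x ∈ (q (rep v)).1.vars :=
        hJoin x a tx _ hTP2 hax htxv (q (rep v)) hq_on
      have hPne : P (rep v) ≠ rep v := by
        intro h
        apply hqnot
        have hbm := blkmem (q (rep v))
        rw [show blk (q (rep v)) = P (rep v) from rfl, h] at hbm
        exact hbm
      have hbv : x ∈ bvars Q (𝒜 (P (rep v))) := by
        rw [bvars, Finset.mem_inter]
        constructor
        · exact Finset.mem_biUnion.mpr ⟨(q (rep v)).1, blkmem _, hqx⟩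
        · refine Finset.mem_union_right _ (Finset.mem_biUnion.mpr ⟨a.1, ?_, hax⟩)
          rw [Finset.mem_sdiff]
          exact ⟨a.2, fun hmem => hPne (hdisj a.1 _ _ hmem haA)⟩
      have hxB : x ∈ (B (P (rep v))).vars := hF2 _ hbv
      refine ⟨hvwr, ?_⟩
      show x ∈ (pW v).1.vars
      simp only [hpW, if_neg hri]
      exact hxB
    have hfin := JTAux2.pgraph_path_support hpWr hdW hstep hu hw ρ hρ
    intro C hC
    exact hfin C hC

end MainProof

/-- If `Q` is a minimal acyclic CQ with join tree `T` and `𝒞` is a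
consistent cover partition for `Q` over `𝒱` in which each atom set `𝒜_i` induces a
connected subtree of `T`, then the induced query `Q_𝒞` is acyclic. -/
theorem statement6 (σ : Schema) (Q : CQ) (𝒱 : Finset CQ)
    (hQ : isCQ σ Q) (hmin : isMinimal Q)
    (T : SimpleGraph {A : Atom // A ∈ Q.body}) (hT : joinTreeProp Q.body T)
    (m : ℕ) (𝒜 : Fin m → Finset Atom) (V : Fin m → CQ) (α ψ : Fin m → ℕ → ℕ)
    (hcp : isCoverPartition Q 𝒱 m 𝒜 V α ψ) (hcons : isConsistent Q m 𝒜 V α)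
    (hconn : ∀ i, connectedIn Q.body T (𝒜 i)) :
    isAcyclicCQ (inducedCQ Q m V α) := by
  exact statement6' σ Q 𝒱 hQ hmin T hT m 𝒜 V α ψ hcp hcons hconn
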